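/- Let G be a connected P5-free graph with an efficient dominating set D, |D| ≥ 2, and let d_1, d_2 ∈ D be distinct. If there is no edge between N(d_1) \ D and N(d_2) \ D, then G contains an induced P5. (Contrapositive of edge-existence between neighborhoods.) -/

import Mathlib

open SimpleGraph

/-- `D` is an efficient dominating set: every vertex is dominated by exactly one vertex of `D`
(a vertex dominates itself and its neighbors). -/
def SimpleGraph.IsEDS {V : Type*} (G : SimpleGraph V) (D : Set V) : Prop :=
  ∀ v : V, ∃! d, d ∈ D ∧ (d = v ∨ G.Adj d v)

/-- The closed neighborhood of a vertex. -/
def SimpleGraph.closedNbhd {V : Type*} (G : SimpleGraph V) (v : V) : Set V :=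
  insert v (G.neighborSet v)

/-- A homogeneous set: at least two vertices, not all of them, and every outside vertex is
adjacent to all or to none of them. -/
def SimpleGraph.IsHomogeneousSet {V : Type*} (G : SimpleGraph V) (H : Set V) : Prop :=
  2 ≤ H.ncard ∧ H ≠ Set.univ ∧
    ∀ v ∉ H, (∀ h ∈ H, G.Adj v h) ∨ (∀ h ∈ H, ¬ G.Adj v h)

/-- A prime graph: at least two vertices and no homogeneous set. -/
def SimpleGraph.IsPrime {V : Type*} [Fintype V] (G : SimpleGraph V) : Prop :=
  2 ≤ Fintype.card V ∧ ∀ H : Set V, ¬ G.IsHomogeneousSet H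

/-- `G` is `P₅`-free: no induced subgraph isomorphic to the path on five vertices. -/
def SimpleGraph.P5Free {V : Type*} (G : SimpleGraph V) : Prop :=
  ¬ Nonempty (SimpleGraph.pathGraph 5 ↪g G)

/-- The graph `2P₂`: the disjoint union of two edges. -/
def twoP2 : SimpleGraph (Fin 4) :=
  SimpleGraph.fromRel (fun a b => (a = 0 ∧ b = 1) ∨ (a = 2 ∧ b = 3))

/-- `G` is `2P₂`-free: no induced subgraph isomorphic to `2P₂`. -/
def SimpleGraph.TwoP2Free {V : Type*} (G : SimpleGraph V) : Prop :=
  ¬ Nonempty (twoP2 ↪g G)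

/-- A thin spider: a split graph with a clique side `C` and independent side `I`,
with a perfect matching between `C` and `I`. -/
def SimpleGraph.IsThinSpider {V : Type*} (G : SimpleGraph V) : Prop :=
  ∃ C I : Set V, Disjoint C I ∧ C ∪ I = Set.univ ∧ G.IsClique C ∧
    (∀ a ∈ I, ∀ b ∈ I, a ≠ b → ¬ G.Adj a b) ∧
    (∀ c ∈ C, ∃! i, i ∈ I ∧ G.Adj c i) ∧
    (∀ i ∈ I, ∃! c, c ∈ C ∧ G.Adj i c)

/-!
Along a shortest walk from `d₁` to `d₂` the `i`-th vertex is at distance exactly `i` from `d₁`,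
so its first five vertices induce a `P₅` once it has length at least `4`. Distinct vertices of an efficient dominating set are at distance at least `3`, and a
walk `d₁ - x - y - d₂` of length `3` would give an edge `xy` between `N(d₁) \ D` and `N(d₂) \ D`.
-/

namespace SimpleGraph.Walk

variable {V : Type*} {G : SimpleGraph V} {u v : V}

theorem dist_getVert_of_length_eq_dist {p : G.Walk u v} (hp : p.length = G.dist u v) {i : ℕ}
    (hi : i ≤ p.length) : G.dist u (p.getVert i) = i := by
  have hle : G.dist u (p.getVert i) ≤ i := by
    simpa [take_length, hi] using G.dist_le (p.take i)
  have hdrop : G.dist (p.getVert i) v ≤ p.length - i := by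
    simpa [drop_length] using G.dist_le (p.drop i)
  have := (p.take i).reachable.dist_triangle_left v
  omega

def pathGraphEmbedding (p : G.Walk u v) (hp : p.length = G.dist u v) {k : ℕ}
    (hk : k ≤ p.length) : pathGraph (k + 1) ↪g G where
  toFun i := p.getVert i
  inj' i j hij := by
    have hi := dist_getVert_of_length_eq_dist hp (i := i) (by omega)
    have hj := dist_getVert_of_length_eq_dist hp (i := j) (by omega)
    exact Fin.ext (hi.symm.trans ((congrArg (G.dist u) hij).trans hj))
  map_rel_iff' {i j} := by
    have hi := dist_getVert_of_length_eq_dist hp (i := i) (by omega)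
    have hj := dist_getVert_of_length_eq_dist hp (i := j) (by omega)
    change G.Adj (p.getVert i) (p.getVert j) ↔ _
    rw [pathGraph_adj]
    constructor
    · intro hadj
      have hne : (i : ℕ) ≠ j := fun h => hadj.ne (by rw [Fin.ext h])
      rcases hadj.diff_dist_adj (u := u) with h | h | h <;> omega
    · rintro (h | h)
      · simpa [← h] using p.adj_getVert_succ (i := i) (by omega)
      · simpa [← h] using (p.adj_getVert_succ (i := j) (by omega)).symm

end SimpleGraph.Walk

namespace SimpleGraph.IsEDS

variable {V : Type*} {G : SimpleGraph V} {D : Set V} {d d₁ d₂ x : V}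

theorem eq_of_adj_of_adj (hD : G.IsEDS D) (hd₁ : d₁ ∈ D) (hd₂ : d₂ ∈ D) (h₁ : G.Adj d₁ x)
    (h₂ : G.Adj d₂ x) : d₁ = d₂ :=
  (hD x).unique ⟨hd₁, .inr h₁⟩ ⟨hd₂, .inr h₂⟩

theorem not_adj (hD : G.IsEDS D) (hd₁ : d₁ ∈ D) (hd₂ : d₂ ∈ D) (hne : d₁ ≠ d₂) :
    ¬ G.Adj d₁ d₂ :=
  fun h => hne ((hD d₂).unique ⟨hd₁, .inr h⟩ ⟨hd₂, .inl rfl⟩)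

theorem notMem_of_adj (hD : G.IsEDS D) (hd : d ∈ D) (h : G.Adj d x) : x ∉ D :=
  fun hx => hD.not_adj hd hx h.ne h

theorem four_le_dist (hD : G.IsEDS D) (hd₁ : d₁ ∈ D) (hd₂ : d₂ ∈ D) (hne : d₁ ≠ d₂)
    (hr : G.Reachable d₁ d₂)
    (hnoedge : ¬ ∃ x ∈ G.neighborSet d₁ \ D, ∃ y ∈ G.neighborSet d₂ \ D, G.Adj x y) :
    4 ≤ G.dist d₁ d₂ := by
  obtain ⟨p, hp⟩ := hr.exists_walk_length_eq_dist
  rw [← hp]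
  rcases p with _ | ⟨h₁, _ | ⟨h₂, _ | ⟨h₃, _ | ⟨_, _⟩⟩⟩⟩
  · exact absurd rfl hne
  · exact absurd h₁ (hD.not_adj hd₁ hd₂ hne)
  · exact absurd (hD.eq_of_adj_of_adj hd₁ hd₂ h₁ h₂.symm) hne
  · exact absurd ⟨_, ⟨h₁, hD.notMem_of_adj hd₁ h₁⟩, _, ⟨h₃.symm, hD.notMem_of_adj hd₂ h₃.symm⟩, h₂⟩
      hnoedge
  · simp

end SimpleGraph.IsEDS

theorem stmt_14_general {V : Type*} (G : SimpleGraph V) (hconn : G.Connected)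
    (D : Set V) (hD : G.IsEDS D)
    (d₁ d₂ : V) (hd₁ : d₁ ∈ D) (hd₂ : d₂ ∈ D) (hne : d₁ ≠ d₂)
    (hnoedge : ¬ ∃ x ∈ G.neighborSet d₁ \ D, ∃ y ∈ G.neighborSet d₂ \ D, G.Adj x y) :
    Nonempty (SimpleGraph.pathGraph 5 ↪g G) := by
  obtain ⟨p, hp⟩ := hconn.exists_walk_length_eq_dist d₁ d₂
  have h4 : 4 ≤ p.length := hp ▸ hD.four_le_dist hd₁ hd₂ hne (hconn d₁ d₂) hnoedge
  exact ⟨p.pathGraphEmbedding hp h4⟩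

theorem stmt_14 {V : Type*} (G : SimpleGraph V) (hconn : G.Connected)
    (D : Set V) (hD : G.IsEDS D) (hcard : 2 ≤ D.ncard)
    (d₁ d₂ : V) (hd₁ : d₁ ∈ D) (hd₂ : d₂ ∈ D) (hne : d₁ ≠ d₂)
    (hnoedge : ¬ ∃ x ∈ G.neighborSet d₁ \ D, ∃ y ∈ G.neighborSet d₂ \ D, G.Adj x y) :
    Nonempty (SimpleGraph.pathGraph 5 ↪g G) :=
  stmt_14_general G hconn D hD d₁ d₂ hd₁ hd₂ hne hnoedge
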